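/- arXiv:2104.02460 — 2 statements merged into one kernel-verified Lean document; each statement's English description precedes it below -/
import Mathlib

section
/- Let X be a geodesic metric space, p ∈ X, and δ > 0 such that every loop contained in a ball of radius δ (centered anywhere in B_{1-ε}(p)) is nullhomotopic inside B₁(p). Let γ, γ' : [0,1] → B_{3ε}(p) be loops based at p with d(γ(t), γ'(t)) < δ/5 for all t ∈ [0,1]. Then γ and γ' are homotopic rel basepoint inside B₁(p). -/
open Metric unitInterval

namespace Stmt6Aux

variable {Y : Type*} [TopologicalSpace Y] {a b : Y}

noncomputable section

theorem apply_eq (P : Path a b) {u v : unitInterval} (h : (u:ℝ) = (v:ℝ)) : P u = P v := by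
  rw [Subtype.ext h]

/-- midpoint of the unit interval -/
def ih : unitInterval := ⟨1/2, by norm_num, by norm_num⟩

/-- First half of a path. -/
def half₁ (P : Path a b) : Path a (P ih) where
  toFun t := P ⟨(t:ℝ)/2, ⟨div_nonneg t.2.1 (by norm_num), by linarith [t.2.2]⟩⟩
  continuous_toFun := P.continuous.comp
    ((continuous_subtype_val.div_const 2).subtype_mk _)
  source' := (apply_eq P (v := 0) (by norm_num)).trans P.source
  target' := apply_eq P (v := ih) (by norm_num [ih])

/-- Second half of a path. -/
def half₂ (P : Path a b) : Path (P ih) b where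
  toFun t := P ⟨((t:ℝ)+1)/2, ⟨div_nonneg (by linarith [t.2.1]) (by norm_num), by linarith [t.2.2]⟩⟩
  continuous_toFun := P.continuous.comp
    (((continuous_subtype_val.add continuous_const).div_const 2).subtype_mk _)
  source' := apply_eq P (v := ih) (by norm_num [ih])
  target' := (apply_eq P (v := 1) (by norm_num)).trans P.target

theorem half_trans (P : Path a b) : (half₁ P).trans (half₂ P) = P := by
  ext t
  rw [Path.trans_apply]
  split_ifs with h
  · exact apply_eq P (by show (2*(t:ℝ))/2 = (t:ℝ); ring)
  · exact apply_eq P (by show ((2*(t:ℝ)-1)+1)/2 = (t:ℝ); ring)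

theorem cancel {P Q : Path a b} (h : (P.trans Q.symm).Homotopic (Path.refl a)) :
    P.Homotopic Q := by
  have h1 : P.Homotopic (P.trans (Path.refl b)) := ⟨(Path.Homotopy.transRefl P).symm⟩
  have h2 : (P.trans (Path.refl b)).Homotopic (P.trans (Q.symm.trans Q)) :=
    (Path.Homotopic.refl P).hcomp ⟨Path.Homotopy.reflSymmTrans Q⟩
  have h3 : (P.trans (Q.symm.trans Q)).Homotopic ((P.trans Q.symm).trans Q) :=
    ⟨(Path.Homotopy.transAssoc P Q.symm Q).symm⟩
  have h4 : ((P.trans Q.symm).trans Q).Homotopic ((Path.refl a).trans Q) :=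
    h.hcomp (Path.Homotopic.refl Q)
  have h5 : ((Path.refl a).trans Q).Homotopic Q := ⟨Path.Homotopy.reflTrans Q⟩
  exact (((h1.trans h2).trans h3).trans h4).trans h5


theorem key {X : Type*} [MetricSpace X] (p : X) (ε δ : ℝ)
    (hε : 0 < ε) (hδ : 0 < δ) (hsize : 3 * ε + δ < 1 - ε)
    (hGeo : ∀ x y : X, ∃ f : ℝ → X, ContinuousOn f (Set.Icc 0 1) ∧
      f 0 = x ∧ f 1 = y ∧
      ∀ s u : ℝ, s ∈ Set.Icc (0:ℝ) 1 → u ∈ Set.Icc (0:ℝ) 1 →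
        dist (f s) (f u) = |u - s| * dist x y)
    (hloops : ∀ x ∈ ball p (1 - ε), ∀ γ : C(unitInterval, X), γ 0 = γ 1 →
      (∀ t, γ t ∈ ball x δ) →
      ∃ F : C(unitInterval × unitInterval, X),
        (∀ t, F (0, t) = γ t) ∧ (∀ t, F (1, t) = γ 0) ∧
        (∀ s, F (s, 0) = γ 0) ∧ (∀ s, F (s, 1) = γ 1) ∧
        (∀ z, F z ∈ ball p 1))
    (n : ℕ) :
    ∀ (x y x' y' : ↥(ball p 1)) (A : Path x y) (B : Path x' y'),
    (∀ t, dist ((A t : X)) p < 3 * ε) → (∀ t, dist ((B t : X)) p < 3 * ε) →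
    (∀ t, dist ((A t : X)) ((B t : X)) < δ / 5) →
    (∀ s t : unitInterval, |(s:ℝ) - (t:ℝ)| ≤ (1/2)^n →
      dist ((A s : X)) ((A t : X)) < δ / 5) →
    (∀ s t : unitInterval, |(s:ℝ) - (t:ℝ)| ≤ (1/2)^n →
      dist ((B s : X)) ((B t : X)) < δ / 5) →
    ∀ (sx : Path x x') (sy : Path y y'),
    (∀ t, dist ((x : X)) ((sx t : X)) ≤ dist ((x:X)) ((x':X))) →
    (∀ t, dist ((y : X)) ((sy t : X)) ≤ dist ((y:X)) ((y':X))) →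
    (A.trans sy).Homotopic (sx.trans B) := by
  induction n with
  | zero =>
    intro x y x' y' A B hA3 hB3 hAB hmA hmB sx sy hsx hsy
    set L : Path x x := (A.trans sy).trans (sx.trans B).symm with hL
    -- every point of L is close to x
    have hbnd : ∀ t, dist ((L t : X)) ((x : X)) < δ := by
      intro t
      have hmem : L t ∈ Set.range L := Set.mem_range_self t
      rw [hL, Path.trans_range, Path.trans_range, Path.symm_range, Path.trans_range] at hmem
      have hAx : ∀ u : unitInterval, dist ((A u : X)) ((x:X)) < δ / 5 := by
        intro u
        have := hmA u 0 (by
          have h0 : ((0:unitInterval):ℝ) = 0 := rfl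
          rw [h0, sub_zero, abs_of_nonneg u.2.1]
          simpa using u.2.2)
        simpa [A.source] using this
      have hxx' : dist ((x:X)) ((x':X)) < δ / 5 := by
        have := hAB 0
        simpa [A.source, B.source] using this
      have hyy' : dist ((y:X)) ((y':X)) < δ / 5 := by
        have := hAB 1
        simpa [A.target, B.target] using this
      have hxy : dist ((x:X)) ((y:X)) < δ / 5 := by
        have := hAx 1
        have h := this
        rw [A.target] at h
        exact (dist_comm (x:X) (y:X) ▸ h)
      rcases hmem with (⟨u, hu⟩ | ⟨u, hu⟩) | (⟨u, hu⟩ | ⟨u, hu⟩)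
      · rw [← hu]; exact lt_trans (hAx u) (by linarith)
      · rw [← hu]
        calc dist ((sy u : X)) ((x:X)) ≤ dist ((sy u : X)) ((y:X)) + dist ((y:X)) ((x:X)) :=
              dist_triangle _ _ _
          _ < δ / 5 + δ / 5 := by
              have h1 := hsy u
              have h2 := hxy
              rw [dist_comm ((y:X)) ((sy u : X))] at h1
              rw [dist_comm ((x:X)) ((y:X))] at h2
              exact add_lt_add_of_le_of_lt (h1.trans hyy'.le) h2
          _ < δ := by linarith
      · rw [← hu]
        have h1 := hsx u
        rw [dist_comm ((x:X)) ((sx u : X))] at h1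
        exact lt_of_le_of_lt h1 (by linarith)
      · rw [← hu]
        calc dist ((B u : X)) ((x:X)) ≤ dist ((B u : X)) ((A u : X)) + dist ((A u : X)) ((x:X)) :=
              dist_triangle _ _ _
          _ < δ / 5 + δ / 5 := add_lt_add (dist_comm ((A u : X)) ((B u : X)) ▸ hAB u) (hAx u)
          _ < δ := by linarith
    -- apply hloops
    have hxball : (x : X) ∈ ball p (1 - ε) := by
      have := hA3 0
      rw [A.source] at this
      exact mem_ball.2 (by linarith)
    set γL : C(unitInterval, X) := ⟨fun t => (L t : X),
      continuous_subtype_val.comp L.continuous⟩ with hγL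
    have hclosed : γL 0 = γL 1 := by
      show ((L 0 : X)) = ((L 1 : X))
      rw [L.source, L.target]
    have hball : ∀ t, γL t ∈ ball (x : X) δ := fun t => mem_ball.2 (hbnd t)
    obtain ⟨F, hF0, hF1, hFs0, hFs1, hF5⟩ := hloops (x:X) hxball γL hclosed hball
    have hL0 : γL 0 = (x : X) := by show ((L 0 : X)) = _; rw [L.source]
    have hhom : L.Homotopic (Path.refl x) := by
      refine ⟨⟨⟨⟨fun z => ⟨F z, hF5 z⟩, F.continuous.subtype_mk _⟩, ?_, ?_⟩, ?_⟩⟩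
      · intro t
        exact Subtype.ext (hF0 t)
      · intro t
        exact Subtype.ext (by show F (1, t) = ((x : X)); rw [hF1 t, hL0])
      · intro s t ht
        rcases ht with h | h
        · subst h
          exact Subtype.ext (by show F (s, 0) = ((L 0 : X)); rw [hFs0 s, hL0, L.source])
        · simp only [Set.mem_singleton_iff] at h
          subst h
          exact Subtype.ext (by show F (s, 1) = ((L 1 : X)); rw [hFs1 s]; rfl)
    exact cancel hhom
  | succ n ihn =>
    intro x y x' y' A B hA3 hB3 hAB hmA hmB sx sy hsx hsy
    set m : ↥(ball p 1) := A ih with hm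
    set m' : ↥(ball p 1) := B ih with hm'
    obtain ⟨f, hfc, hf0, hf1, hfd⟩ := hGeo (m : X) (m' : X)
    have hd : dist ((m:X)) ((m':X)) < δ / 5 := hAB ih
    have hdist : ∀ t : unitInterval, dist ((m:X)) (f t) ≤ dist ((m:X)) ((m':X)) := by
      intro t
      have h := hfd 0 t (by constructor <;> norm_num) t.2
      rw [hf0] at h
      rw [h, sub_zero, abs_of_nonneg t.2.1]
      nlinarith [t.2.2, dist_nonneg (x := (m:X)) (y := (m':X)), t.2.1]
    have hmem : ∀ t : unitInterval, f t ∈ ball p 1 := by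
      intro t
      have h1 : dist (f t) p ≤ dist (f t) ((m:X)) + dist ((m:X)) p := dist_triangle _ _ _
      have h2 := hdist t
      rw [dist_comm ((m:X)) (f t)] at h2
      have h3 := hA3 ih
      exact mem_ball.2 (by linarith)
    set sm : Path m m' :=
      { toFun := fun t => ⟨f t, hmem t⟩
        continuous_toFun := (hfc.comp_continuous continuous_subtype_val (fun t => t.2)).subtype_mk _
        source' := Subtype.ext (by show f ((0:unitInterval):ℝ) = (m:X); rw [show ((0:unitInterval):ℝ) = 0 from rfl, hf0])
        target' := Subtype.ext (by show f ((1:unitInterval):ℝ) = (m':X); rw [show ((1:unitInterval):ℝ) = 1 from rfl, hf1]) } with hsm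
    have hsmd : ∀ t, dist ((m:X)) ((sm t : X)) ≤ dist ((m:X)) ((m':X)) := fun t => hdist t
    have IH1 := ihn x m x' m' (half₁ A) (half₁ B)
      (fun t => hA3 _) (fun t => hB3 _) (fun t => hAB _)
      (by
        intro s t hst
        refine hmA _ _ ?_
        show |(s:ℝ)/2 - (t:ℝ)/2| ≤ (1/2)^(n+1)
        rw [show (s:ℝ)/2 - (t:ℝ)/2 = ((s:ℝ) - (t:ℝ))/2 by ring, abs_div, pow_succ]
        rw [abs_of_nonneg (by norm_num : (0:ℝ) ≤ 2)]
        nlinarith [abs_nonneg ((s:ℝ) - (t:ℝ))])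
      (by
        intro s t hst
        refine hmB _ _ ?_
        show |(s:ℝ)/2 - (t:ℝ)/2| ≤ (1/2)^(n+1)
        rw [show (s:ℝ)/2 - (t:ℝ)/2 = ((s:ℝ) - (t:ℝ))/2 by ring, abs_div, pow_succ]
        rw [abs_of_nonneg (by norm_num : (0:ℝ) ≤ 2)]
        nlinarith [abs_nonneg ((s:ℝ) - (t:ℝ))])
      sx sm hsx hsmd
    have IH2 := ihn m y m' y' (half₂ A) (half₂ B)
      (fun t => hA3 _) (fun t => hB3 _) (fun t => hAB _)
      (by
        intro s t hst
        refine hmA _ _ ?_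
        show |((s:ℝ)+1)/2 - ((t:ℝ)+1)/2| ≤ (1/2)^(n+1)
        rw [show ((s:ℝ)+1)/2 - ((t:ℝ)+1)/2 = ((s:ℝ) - (t:ℝ))/2 by ring, abs_div, pow_succ]
        rw [abs_of_nonneg (by norm_num : (0:ℝ) ≤ 2)]
        nlinarith [abs_nonneg ((s:ℝ) - (t:ℝ))])
      (by
        intro s t hst
        refine hmB _ _ ?_
        show |((s:ℝ)+1)/2 - ((t:ℝ)+1)/2| ≤ (1/2)^(n+1)
        rw [show ((s:ℝ)+1)/2 - ((t:ℝ)+1)/2 = ((s:ℝ) - (t:ℝ))/2 by ring, abs_div, pow_succ]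
        rw [abs_of_nonneg (by norm_num : (0:ℝ) ≤ 2)]
        nlinarith [abs_nonneg ((s:ℝ) - (t:ℝ))])
      sm sy hsmd hsy
    have h1 : (((half₁ A).trans (half₂ A)).trans sy).Homotopic
        ((half₁ A).trans ((half₂ A).trans sy)) :=
      ⟨Path.Homotopy.transAssoc _ _ _⟩
    have h2 : ((half₁ A).trans ((half₂ A).trans sy)).Homotopic
        ((half₁ A).trans (sm.trans (half₂ B))) :=
      (Path.Homotopic.refl _).hcomp IH2
    have h3 : ((half₁ A).trans (sm.trans (half₂ B))).Homotopic
        (((half₁ A).trans sm).trans (half₂ B)) :=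
      ⟨(Path.Homotopy.transAssoc _ _ _).symm⟩
    have h4 : (((half₁ A).trans sm).trans (half₂ B)).Homotopic
        ((sx.trans (half₁ B)).trans (half₂ B)) :=
      IH1.hcomp (Path.Homotopic.refl _)
    have h5 : ((sx.trans (half₁ B)).trans (half₂ B)).Homotopic
        (sx.trans ((half₁ B).trans (half₂ B))) :=
      ⟨Path.Homotopy.transAssoc _ _ _⟩
    have main := (((h1.trans h2).trans h3).trans h4).trans h5
    rwa [half_trans, half_trans] at main




end
end Stmt6Aux



open Metric

/-- In a geodesic space, if every loop lying in a `δ`-ball centered in `B_{1-ε}(p)` is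
nullhomotopic inside `B₁(p)`, then any two loops based at `p` contained in `B_{3ε}(p)`
that are pointwise `δ/5`-close are homotopic rel basepoint inside `B₁(p)`. -/
theorem stmt6 {X : Type*} [MetricSpace X] (p : X) (ε δ : ℝ)
    (hε : 0 < ε) (hδ : 0 < δ) (hsize : 3 * ε + δ < 1 - ε)
    (hGeo : ∀ x y : X, ∃ f : ℝ → X, ContinuousOn f (Set.Icc 0 1) ∧
      f 0 = x ∧ f 1 = y ∧
      ∀ s u : ℝ, s ∈ Set.Icc (0:ℝ) 1 → u ∈ Set.Icc (0:ℝ) 1 →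
        dist (f s) (f u) = |u - s| * dist x y)
    (hloops : ∀ x ∈ ball p (1 - ε), ∀ γ : C(unitInterval, X), γ 0 = γ 1 →
      (∀ t, γ t ∈ ball x δ) →
      ∃ F : C(unitInterval × unitInterval, X),
        (∀ t, F (0, t) = γ t) ∧ (∀ t, F (1, t) = γ 0) ∧
        (∀ s, F (s, 0) = γ 0) ∧ (∀ s, F (s, 1) = γ 1) ∧
        (∀ z, F z ∈ ball p 1))
    (γ γ' : C(unitInterval, X))
    (hbase : γ 0 = p ∧ γ 1 = p ∧ γ' 0 = p ∧ γ' 1 = p)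
    (hin : ∀ t, γ t ∈ ball p (3 * ε)) (hin' : ∀ t, γ' t ∈ ball p (3 * ε))
    (hclose : ∀ t, dist (γ t) (γ' t) < δ / 5) :
    ∃ F : C(unitInterval × unitInterval, X),
      (∀ t, F (0, t) = γ t) ∧ (∀ t, F (1, t) = γ' t) ∧
      (∀ s, F (s, 0) = p) ∧ (∀ s, F (s, 1) = p) ∧
      (∀ z, F z ∈ ball p 1) := by
  obtain ⟨hb0, hb1, hb0', hb1'⟩ := hbase
  have h3ε1 : 3 * ε < 1 := by linarith
  have hball : ∀ t, γ t ∈ ball p 1 := fun t => ball_subset_ball h3ε1.le (hin t)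
  have hball' : ∀ t, γ' t ∈ ball p 1 := fun t => ball_subset_ball h3ε1.le (hin' t)
  have hp1 : p ∈ ball p 1 := mem_ball_self (by linarith)
  set pY : ↥(ball p 1) := ⟨p, hp1⟩ with hpY
  set γY : Path pY pY :=
    { toFun := fun t => ⟨γ t, hball t⟩
      continuous_toFun := γ.continuous.subtype_mk _
      source' := Subtype.ext hb0
      target' := Subtype.ext hb1 } with hγY
  set γY' : Path pY pY :=
    { toFun := fun t => ⟨γ' t, hball' t⟩
      continuous_toFun := γ'.continuous.subtype_mk _
      source' := Subtype.ext hb0'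
      target' := Subtype.ext hb1' } with hγY'
  -- uniform continuity and choice of n
  have uc : UniformContinuous γ := CompactSpace.uniformContinuous_of_continuous γ.continuous
  have uc' : UniformContinuous γ' := CompactSpace.uniformContinuous_of_continuous γ'.continuous
  obtain ⟨d₁, hd₁, hmod₁⟩ := Metric.uniformContinuous_iff.mp uc (δ/5) (by linarith)
  obtain ⟨d₂, hd₂, hmod₂⟩ := Metric.uniformContinuous_iff.mp uc' (δ/5) (by linarith)
  obtain ⟨n, hn⟩ := exists_pow_lt_of_lt_one (lt_min hd₁ hd₂) (by norm_num : (1:ℝ)/2 < 1)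
  have key := Stmt6Aux.key p ε δ hε hδ hsize hGeo hloops n pY pY pY pY γY γY'
    (fun t => by
      have := hin t
      rw [mem_ball] at this
      exact this)
    (fun t => by
      have := hin' t
      rw [mem_ball] at this
      exact this)
    (fun t => hclose t)
    (fun s t hst => by
      refine hmod₁ ?_
      rw [Subtype.dist_eq, Real.dist_eq]
      exact lt_of_le_of_lt hst (lt_of_lt_of_le hn (min_le_left _ _)))
    (fun s t hst => by
      refine hmod₂ ?_
      rw [Subtype.dist_eq, Real.dist_eq]
      exact lt_of_le_of_lt hst (lt_of_lt_of_le hn (min_le_right _ _)))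
    (Path.refl pY) (Path.refl pY)
    (fun t => le_refl _) (fun t => le_refl _)
  have hfinal : γY.Homotopic γY' :=
    (Path.Homotopic.trans ⟨(Path.Homotopy.transRefl γY).symm⟩
      key).trans ⟨Path.Homotopy.reflTrans γY'⟩
  obtain ⟨H⟩ := hfinal
  refine ⟨⟨fun z => ((H z : ↥(ball p 1)) : X),
      continuous_subtype_val.comp H.continuous⟩, ?_, ?_, ?_, ?_, ?_⟩
  · intro t
    show ((H (0, t) : ↥(ball p 1)) : X) = γ t
    rw [H.apply_zero]
    rfl
  · intro t
    show ((H (1, t) : ↥(ball p 1)) : X) = γ' t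
    rw [H.apply_one]
    rfl
  · intro s
    show ((H (s, 0) : ↥(ball p 1)) : X) = p
    rw [ContinuousMap.HomotopyRel.eq_fst H s (Or.inl rfl)]
    show ((γY 0 : ↥(ball p 1)) : X) = p
    rw [γY.source]
  · intro s
    show ((H (s, 1) : ↥(ball p 1)) : X) = p
    rw [ContinuousMap.HomotopyRel.eq_fst H s (Or.inr rfl)]
    show ((γY 1 : ↥(ball p 1)) : X) = p
    rw [γY.target]
  · intro z
    exact (H z).2
end

section
/- Let X and Y be metric spaces and suppose there is a metric on the disjoint union X ⊔ Y extending the metrics of X and Y such that X and Y are each ε-dense in the union, with Y a geodesic space. Then for every continuous path γ : [0,1] → X there exists a continuous path γ' : [0,1] → Y with d(γ(t), γ'(t)) ≤ 5ε (distance measured in X ⊔ Y) for all t; moreover if γ is a loop then γ' can be chosen to be a loop. -/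
/-- Transporting paths across a Gromov–Hausdorff approximation: given an admissible
metric `d` on `X ⊔ Y` extending both metrics in which `X` and `Y` are `ε`-dense, with
`Y` geodesic, every continuous path in `X` is `5ε`-shadowed by a continuous path in `Y`,
and loops by loops. -/
theorem stmt10 {X Y : Type*} [MetricSpace X] [MetricSpace Y]
    (ε : ℝ) (hε : 0 < ε) (d : (X ⊕ Y) → (X ⊕ Y) → ℝ)
    (hsymm : ∀ a b, d a b = d b a)
    (hself : ∀ a, d a a = 0)
    (heq : ∀ a b, d a b = 0 → a = b)
    (htri : ∀ a b c, d a c ≤ d a b + d b c)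
    (hdX : ∀ x x' : X, d (Sum.inl x) (Sum.inl x') = dist x x')
    (hdY : ∀ y y' : Y, d (Sum.inr y) (Sum.inr y') = dist y y')
    (hdenseX : ∀ a, ∃ x : X, d a (Sum.inl x) ≤ ε)
    (hdenseY : ∀ a, ∃ y : Y, d a (Sum.inr y) ≤ ε)
    (hGeoY : ∀ y y' : Y, ∃ f : ℝ → Y, ContinuousOn f (Set.Icc 0 1) ∧
      f 0 = y ∧ f 1 = y' ∧
      ∀ s u : ℝ, s ∈ Set.Icc (0:ℝ) 1 → u ∈ Set.Icc (0:ℝ) 1 →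
        dist (f s) (f u) = |u - s| * dist y y')
    (γ : C(unitInterval, X)) :
    ∃ γ' : C(unitInterval, Y),
      (∀ t, d (Sum.inl (γ t)) (Sum.inr (γ' t)) ≤ 5 * ε) ∧
      (γ 0 = γ 1 → γ' 0 = γ' 1) := by
  classical
  obtain ⟨δ, hδ, hδε⟩ := Metric.uniformContinuous_iff.mp
    (CompactSpace.uniformContinuous_of_continuous γ.continuous) ε hε
  obtain ⟨n₀, hn₀⟩ := exists_nat_one_div_lt hδ
  set n : ℕ := n₀ + 1 with hn
  have hnpos : (0:ℝ) < n := by positivity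
  have hnδ : 1 / (n:ℝ) < δ := by
    have : ((n:ℝ)) = (n₀:ℝ) + 1 := by push_cast [hn]; ring
    rw [this]; exact hn₀
  set pt : ℝ → X := fun t => γ (Set.projIcc 0 1 zero_le_one t) with hptdef
  have hptd : ∀ a b : ℝ, |a - b| < δ → dist (pt a) (pt b) < ε := by
    intro a b hab
    apply hδε
    calc dist (Set.projIcc 0 1 zero_le_one a) (Set.projIcc 0 1 zero_le_one b)
        ≤ 1 * dist a b := (LipschitzWith.projIcc zero_le_one).dist_le_mul a b
      _ = |a - b| := by rw [one_mul, Real.dist_eq]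
      _ < δ := hab
  set y : ℕ → Y := fun i => Classical.choose (hdenseY (Sum.inl (pt ((i:ℝ) / n)))) with hydef
  have hyspec : ∀ i : ℕ, d (Sum.inl (pt ((i:ℝ) / n))) (Sum.inr (y i)) ≤ ε :=
    fun i => Classical.choose_spec (hdenseY (Sum.inl (pt ((i:ℝ) / n))))
  have hy3 : ∀ i : ℕ, dist (y i) (y (i+1)) ≤ 3 * ε := by
    intro i
    rw [← hdY]
    have h1 : d (Sum.inr (y i)) (Sum.inl (pt ((i:ℝ)/n))) ≤ ε := by
      rw [hsymm]; exact hyspec i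
    have h2 : d (Sum.inl (pt ((i:ℝ)/n))) (Sum.inl (pt (((i+1:ℕ)) / n : ℝ))) ≤ ε := by
      rw [hdX]
      refine le_of_lt (hptd _ _ ?_)
      have habs : |(i:ℝ)/n - (((i+1:ℕ)):ℝ)/n| = 1/n := by
        rw [div_sub_div_same, abs_div, abs_of_pos hnpos]
        congr 1
        push_cast
        rw [abs_sub_comm]
        simp
      rw [habs]; exact hnδ
    have h3 : d (Sum.inl (pt (((i+1:ℕ)) / n : ℝ))) (Sum.inr (y (i+1))) ≤ ε := hyspec (i+1)
    calc d (Sum.inr (y i)) (Sum.inr (y (i+1)))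
        ≤ d (Sum.inr (y i)) (Sum.inl (pt ((i:ℝ)/n))) +
            d (Sum.inl (pt ((i:ℝ)/n))) (Sum.inr (y (i+1))) := htri _ _ _
      _ ≤ d (Sum.inr (y i)) (Sum.inl (pt ((i:ℝ)/n))) +
            (d (Sum.inl (pt ((i:ℝ)/n))) (Sum.inl (pt (((i+1:ℕ)) / n : ℝ))) +
              d (Sum.inl (pt (((i+1:ℕ)) / n : ℝ))) (Sum.inr (y (i+1)))) := by
          gcongr; exact htri _ _ _
      _ ≤ ε + (ε + ε) := by gcongr
      _ = 3 * ε := by ring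
  set f : ℕ → ℝ → Y := fun i => Classical.choose (hGeoY (y i) (y (i+1))) with hfdef
  have hfspec : ∀ i : ℕ, f i 0 = y i ∧ f i 1 = y (i+1) ∧
      ∀ s u : ℝ, s ∈ Set.Icc (0:ℝ) 1 → u ∈ Set.Icc (0:ℝ) 1 →
        dist (f i s) (f i u) = |u - s| * dist (y i) (y (i+1)) := by
    intro i
    obtain ⟨_, h0, h1, hd⟩ := Classical.choose_spec (hGeoY (y i) (y (i+1)))
    exact ⟨h0, h1, hd⟩
  have hytel : ∀ k m : ℕ, k ≤ m → dist (y k) (y m) ≤ 3 * ε * ((m:ℝ) - k) := by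
    intro k m hkm
    induction m, hkm using Nat.le_induction with
    | base => simp
    | succ m hkm ih =>
        calc dist (y k) (y (m+1)) ≤ dist (y k) (y m) + dist (y m) (y (m+1)) :=
              dist_triangle _ _ _
          _ ≤ 3 * ε * ((m:ℝ) - k) + 3 * ε := add_le_add ih (hy3 m)
          _ = 3 * ε * (((m+1:ℕ):ℝ) - k) := by push_cast; ring
  set G : ℝ → Y := fun s => f ⌊s⌋₊ (s - ⌊s⌋₊) with hGdef
  have hfrac : ∀ s : ℝ, 0 ≤ s → s - (⌊s⌋₊:ℝ) ∈ Set.Icc (0:ℝ) 1 := by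
    intro s hs
    constructor
    · linarith [Nat.floor_le hs]
    · linarith [Nat.lt_floor_add_one s]
  have hGlip : ∀ s u : ℝ, 0 ≤ s → s ≤ u → dist (G s) (G u) ≤ 3 * ε * (u - s) := by
    intro s u hs hsu
    have hu : 0 ≤ u := hs.trans hsu
    set k := ⌊s⌋₊ with hk
    set m := ⌊u⌋₊ with hm
    have hkm : k ≤ m := Nat.floor_mono hsu
    have hks : (k:ℝ) ≤ s := Nat.floor_le hs
    have hsk : s < (k:ℝ) + 1 := Nat.lt_floor_add_one s
    have hms : (m:ℝ) ≤ u := Nat.floor_le hu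
    have hum : u < (m:ℝ) + 1 := Nat.lt_floor_add_one u
    obtain ⟨hk0, hk1, hkd⟩ := hfspec k
    obtain ⟨hm0, hm1, hmd⟩ := hfspec m
    have hGs : G s = f k (s - (k:ℝ)) := rfl
    have hGu : G u = f m (u - (m:ℝ)) := rfl
    rcases eq_or_lt_of_le hkm with heqkm | hlt
    · have hGu2 : G u = f k (u - (k:ℝ)) := by rw [hGu, ← heqkm]
      rw [hGs, hGu2, hkd _ _ (hfrac s hs) (by rw [heqkm]; exact hfrac u hu)]
      have habs : |(u - (k:ℝ)) - (s - k)| = u - s := by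
        rw [abs_of_nonneg (by linarith)]; ring
      rw [habs]
      calc (u - s) * dist (y k) (y (k+1)) ≤ (u - s) * (3*ε) :=
            mul_le_mul_of_nonneg_left (hy3 k) (by linarith)
        _ = 3 * ε * (u - s) := by ring
    · have hk1m : k + 1 ≤ m := hlt
      have e1 : dist (G s) (y (k+1)) ≤ 3 * ε * ((k:ℝ) + 1 - s) := by
        rw [hGs, ← hk1, hkd _ _ (hfrac s hs) (Set.right_mem_Icc.mpr zero_le_one)]
        rw [abs_of_nonneg (by linarith)]
        calc (1 - (s - (k:ℝ))) * dist (y k) (y (k+1)) ≤ (1 - (s - (k:ℝ))) * (3*ε) :=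
              mul_le_mul_of_nonneg_left (hy3 k) (by linarith)
          _ = 3 * ε * ((k:ℝ) + 1 - s) := by ring
      have e2 : dist (y (k+1)) (y m) ≤ 3 * ε * ((m:ℝ) - ((k:ℝ)+1)) := by
        have := hytel (k+1) m hk1m
        push_cast at this ⊢
        linarith
      have e3 : dist (y m) (G u) ≤ 3 * ε * (u - m) := by
        rw [hGu, ← hm0, hmd _ _ (Set.left_mem_Icc.mpr zero_le_one) (hfrac u hu)]
        rw [sub_zero, abs_of_nonneg (by linarith)]
        calc (u - (m:ℝ)) * dist (y m) (y (m+1)) ≤ (u - (m:ℝ)) * (3*ε) :=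
              mul_le_mul_of_nonneg_left (hy3 m) (by linarith)
          _ = 3 * ε * (u - (m:ℝ)) := by ring
      calc dist (G s) (G u) ≤ dist (G s) (y (k+1)) + dist (y (k+1)) (G u) :=
            dist_triangle _ _ _
        _ ≤ dist (G s) (y (k+1)) + (dist (y (k+1)) (y m) + dist (y m) (G u)) := by
            gcongr; exact dist_triangle _ _ _
        _ ≤ 3 * ε * ((k:ℝ) + 1 - s) + (3 * ε * ((m:ℝ) - ((k:ℝ)+1)) + 3 * ε * (u - m)) :=
            add_le_add e1 (add_le_add e2 e3)
        _ = 3 * ε * (u - s) := by ring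
  have hcont : Continuous (fun t : unitInterval => G ((n:ℝ) * t)) := by
    have hlip : LipschitzWith (3 * ε * n).toNNReal (fun t : unitInterval => G ((n:ℝ) * t)) := by
      apply LipschitzWith.of_dist_le_mul
      intro t t'
      have key : ∀ a b : unitInterval, (a:ℝ) ≤ b →
          dist (G ((n:ℝ) * a)) (G ((n:ℝ) * b)) ≤ (3*ε*n).toNNReal * dist a b := by
        intro a b hab
        have h0 : (0:ℝ) ≤ (n:ℝ) * a := mul_nonneg hnpos.le a.2.1
        have h1 : (n:ℝ) * a ≤ (n:ℝ) * b := mul_le_mul_of_nonneg_left hab hnpos.le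
        calc dist (G ((n:ℝ) * a)) (G ((n:ℝ) * b)) ≤ 3 * ε * ((n:ℝ)*b - (n:ℝ)*a) :=
              hGlip _ _ h0 h1
          _ = 3 * ε * n * |(a:ℝ) - (b:ℝ)| := by
              rw [abs_of_nonpos (by linarith)]; ring
          _ = (3*ε*n).toNNReal * dist a b := by
              rw [Real.coe_toNNReal _ (by positivity), Subtype.dist_eq, Real.dist_eq]
      rcases le_total (t:ℝ) (t':ℝ) with h | h
      · exact key t t' h
      · rw [dist_comm, dist_comm t t']; exact key t' t h
    exact hlip.continuous
  refine ⟨⟨fun t => G ((n:ℝ) * t), hcont⟩, ?_, ?_⟩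
  · intro t
    show d (Sum.inl (γ t)) (Sum.inr (G ((n:ℝ) * t))) ≤ 5 * ε
    have ht0 : (0:ℝ) ≤ (t:ℝ) := t.2.1
    have ht1 : (t:ℝ) ≤ 1 := t.2.2
    set s : ℝ := (n:ℝ) * t with hsdef
    have hs0 : 0 ≤ s := mul_nonneg hnpos.le ht0
    set k := ⌊s⌋₊ with hk
    have hks : (k:ℝ) ≤ s := Nat.floor_le hs0
    have hsk : s < (k:ℝ) + 1 := Nat.lt_floor_add_one s
    have hγpt : γ t = pt (t:ℝ) := by
      simp [hptdef, Set.projIcc_val zero_le_one t]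
    have hb1 : d (Sum.inl (pt (t:ℝ))) (Sum.inl (pt ((k:ℝ)/n))) ≤ ε := by
      rw [hdX]
      refine le_of_lt (hptd _ _ ?_)
      have habs : |(t:ℝ) - (k:ℝ)/n| = (s - k)/n := by
        rw [abs_of_nonneg]
        · field_simp [hsdef]; ring
        · rw [sub_nonneg, div_le_iff₀ hnpos]
          calc (k:ℝ) ≤ s := hks
            _ = (t:ℝ) * n := by rw [hsdef]; ring
      rw [habs]
      calc (s - k)/n < 1/n := by
            apply (div_lt_div_iff_of_pos_right hnpos).mpr; linarith
        _ < δ := hnδ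
    have hb2 : d (Sum.inl (pt ((k:ℝ)/n))) (Sum.inr (y k)) ≤ ε := hyspec k
    have hb3 : d (Sum.inr (y k)) (Sum.inr (G s)) ≤ 3 * ε := by
      rw [hdY]
      obtain ⟨hk0, hk1, hkd⟩ := hfspec k
      have hGs : G s = f k (s - (k:ℝ)) := rfl
      rw [hGs, ← hk0, hkd _ _ (Set.left_mem_Icc.mpr zero_le_one) (hfrac s hs0)]
      rw [sub_zero, abs_of_nonneg (by linarith)]
      calc (s - (k:ℝ)) * dist (y k) (y (k+1)) ≤ 1 * (3*ε) := by
            apply mul_le_mul (by linarith) (hy3 k) dist_nonneg (by norm_num)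
        _ = 3 * ε := one_mul _
    calc d (Sum.inl (γ t)) (Sum.inr (G s))
        = d (Sum.inl (pt (t:ℝ))) (Sum.inr (G s)) := by rw [hγpt]
      _ ≤ d (Sum.inl (pt (t:ℝ))) (Sum.inl (pt ((k:ℝ)/n))) +
            d (Sum.inl (pt ((k:ℝ)/n))) (Sum.inr (G s)) := htri _ _ _
      _ ≤ d (Sum.inl (pt (t:ℝ))) (Sum.inl (pt ((k:ℝ)/n))) +
            (d (Sum.inl (pt ((k:ℝ)/n))) (Sum.inr (y k)) +
              d (Sum.inr (y k)) (Sum.inr (G s))) := by gcongr; exact htri _ _ _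
      _ ≤ ε + (ε + 3 * ε) := add_le_add hb1 (add_le_add hb2 hb3)
      _ = 5 * ε := by ring
  · intro hloop
    show G ((n:ℝ) * ((0:unitInterval):ℝ)) = G ((n:ℝ) * ((1:unitInterval):ℝ))
    have hc0 : ((0:unitInterval):ℝ) = 0 := rfl
    have hc1 : ((1:unitInterval):ℝ) = 1 := rfl
    rw [hc0, hc1, mul_zero, mul_one]
    have hG0 : G 0 = y 0 := by
      show f ⌊(0:ℝ)⌋₊ ((0:ℝ) - (⌊(0:ℝ)⌋₊:ℝ)) = y 0
      rw [Nat.floor_zero]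
      simpa using (hfspec 0).1
    have hGn : G (n:ℝ) = y n := by
      show f ⌊(n:ℝ)⌋₊ ((n:ℝ) - (⌊(n:ℝ)⌋₊:ℝ)) = y n
      rw [Nat.floor_natCast]
      simpa using (hfspec n).1
    have hproj1 : Set.projIcc (0:ℝ) 1 zero_le_one 1 = 1 := by
      apply Subtype.ext
      simp [Set.coe_projIcc]
    have hproj0 : Set.projIcc (0:ℝ) 1 zero_le_one 0 = 0 := by
      apply Subtype.ext
      simp [Set.coe_projIcc]
    have hpteq : pt (((n:ℕ):ℝ)/n) = pt (((0:ℕ):ℝ)/n) := by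
      rw [show ((n:ℕ):ℝ)/n = 1 from div_self hnpos.ne',
          show ((0:ℕ):ℝ)/n = 0 by simp]
      show γ (Set.projIcc 0 1 zero_le_one 1) = γ (Set.projIcc 0 1 zero_le_one 0)
      rw [hproj0, hproj1]
      exact hloop.symm
    have hyn : y n = y 0 :=
      congrArg (fun p => Classical.choose (hdenseY (Sum.inl p))) hpteq
    rw [hG0, hGn, hyn]
end
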